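/- arXiv:1307.6885 — 5 statements merged into one kernel-verified Lean document; each statement's English description precedes it below -/
import Mathlib

section
/- Let A ∈ ℂ^{n×n} be Hermitian and B ∈ ℂ^{n×n} be Hermitian positive definite with condition number κ(B) = ‖B‖₂·‖B⁻¹‖₂. Let Q ∈ ℂ^{n×r} with Q*BQ = I_r and T = Q*AQ, and suppose ‖A − (BQ)T(BQ)*‖_B ≤ 2ε for some ε ≥ 0. Let Ω ∈ ℂ^{n×r} be such that F := Q*BΩ is invertible, and set T̃ = (F*)⁻¹(Ω*AΩ)F⁻¹ (this is the single-pass approximation (Ω*BQ)⁻¹(Ω*AΩ)(Q*BΩ)⁻¹). Then ‖T − T̃‖₂ ≤ 2ε·√κ(B)·‖Ω‖₂²·‖F⁻¹‖₂², i.e., ‖T − T̃‖₂ ≤ 2ε·√κ(B)·σ_max(Ω)²/σ_min(F)². -/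
/-!
Put `F = Q*BΩ = (BQ)*Ω` and `E = A - (BQ)T(BQ)*`. Then `Ω*EΩ = Ω*AΩ - F*TF`, so
`T - T̃ = -(F⁻¹)* (Ω*EΩ) F⁻¹` and `‖T - T̃‖₂ ≤ ‖E‖₂ ‖Ω‖₂² ‖F⁻¹‖₂²`.
Writing `B = S*S` with `S` invertible, `‖E‖_B = ‖SES⁻¹‖₂`, hence
`‖E‖₂ ≤ ‖S‖₂ ‖S⁻¹‖₂ ‖E‖_B = √κ(B) ‖E‖_B ≤ 2ε √κ(B)`.
-/

open Matrix ComplexOrder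

noncomputable section

/-- Euclidean (ℓ²) norm of a complex vector. -/
def vecNorm2 {m : Type*} [Fintype m] (x : m → ℂ) : ℝ :=
  Real.sqrt (∑ i, ‖x i‖ ^ 2)

/-- Spectral (ℓ²-operator) norm of a complex matrix. -/
def specNorm {m p : Type*} [Fintype m] [Fintype p] (M : Matrix m p ℂ) : ℝ :=
  sSup {t : ℝ | ∃ x : p → ℂ, x ≠ 0 ∧ t = vecNorm2 (M *ᵥ x) / vecNorm2 x}

/-- The B-inner product ⟨x,y⟩_B = y*Bx. -/
def Binner {m : Type*} [Fintype m] (B : Matrix m m ℂ) (x y : m → ℂ) : ℂ :=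
  star y ⬝ᵥ B *ᵥ x

/-- The B-norm of a vector, ‖x‖_B = √(x*Bx). -/
def vecBnorm {m : Type*} [Fintype m] (B : Matrix m m ℂ) (x : m → ℂ) : ℝ :=
  Real.sqrt (star x ⬝ᵥ B *ᵥ x).re

/-- The induced B-norm of a matrix, ‖M‖_B = sup_{x ≠ 0} ‖Mx‖_B / ‖x‖_B. -/
def matBnorm {m : Type*} [Fintype m] (B M : Matrix m m ℂ) : ℝ :=
  sSup {t : ℝ | ∃ x : m → ℂ, x ≠ 0 ∧ t = vecBnorm B (M *ᵥ x) / vecBnorm B x}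

open scoped Matrix.Norms.L2Operator MatrixOrder

theorem ContinuousLinearMap.sSup_div_norm_eq_opNorm {𝕜 E F : Type*} [NontriviallyNormedField 𝕜]
    [NormedAddCommGroup E] [NormedAddCommGroup F] [NormedSpace 𝕜 E] [NormedSpace 𝕜 F]
    (f : E →L[𝕜] F) : sSup {t : ℝ | ∃ x : E, x ≠ 0 ∧ t = ‖f x‖ / ‖x‖} = ‖f‖ := by
  have hle : ∀ t ∈ {t : ℝ | ∃ x : E, x ≠ 0 ∧ t = ‖f x‖ / ‖x‖}, t ≤ ‖f‖ := by
    rintro t ⟨x, -, rfl⟩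
    exact f.ratio_le_opNorm x
  refine le_antisymm (Real.sSup_le hle (norm_nonneg f)) (f.opNorm_le_bound ?_ fun x => ?_)
  · exact Real.sSup_nonneg fun t ⟨x, _, ht⟩ => ht ▸ by positivity
  · rcases eq_or_ne x 0 with rfl | hx
    · simp
    · rw [← div_le_iff₀ (norm_pos_iff.mpr hx)]
      exact le_csSup ⟨‖f‖, hle⟩ ⟨x, hx, rfl⟩

section

variable {m p : Type*} [Fintype m] [Fintype p]

theorem vecNorm2_eq_norm_toLp (x : m → ℂ) : vecNorm2 x = ‖WithLp.toLp 2 x‖ := by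
  simp [vecNorm2, EuclideanSpace.norm_eq]

theorem specNorm_eq_l2_opNorm [DecidableEq p] (M : Matrix m p ℂ) : specNorm M = ‖M‖ := by
  rw [l2_opNorm_def, ← ContinuousLinearMap.sSup_div_norm_eq_opNorm, specNorm]
  congr 1
  ext t
  constructor
  · rintro ⟨x, hx, rfl⟩
    exact ⟨WithLp.toLp 2 x, by simpa using hx, by simp only [vecNorm2_eq_norm_toLp]; rfl⟩
  · rintro ⟨v, hv, rfl⟩
    exact ⟨v.ofLp, by simpa using hv, by simp only [vecNorm2_eq_norm_toLp]; rfl⟩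

theorem vecBnorm_eq_vecNorm2_mulVec {B S : Matrix m m ℂ} (hS : Sᴴ * S = B) (x : m → ℂ) :
    vecBnorm B x = vecNorm2 (S *ᵥ x) := by
  have hdot : (star (S *ᵥ x) ⬝ᵥ S *ᵥ x).re = ∑ i, ‖(S *ᵥ x) i‖ ^ 2 := by
    simp only [dotProduct, Pi.star_apply, Complex.re_sum, RCLike.star_def, Complex.conj_mul',
      ← Complex.ofReal_pow, Complex.ofReal_re]
  rw [vecBnorm, vecNorm2, ← hdot, ← hS, ← mulVec_mulVec, dotProduct_mulVec, star_mulVec]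

end

section

variable {m : Type*} [Fintype m] [DecidableEq m] {B S : Matrix m m ℂ}

theorem matBnorm_eq_specNorm_conj (hS : Sᴴ * S = B) (hSu : IsUnit S) (M : Matrix m m ℂ) :
    matBnorm B M = specNorm (S * M * S⁻¹) := by
  have hSdet : IsUnit S.det := (isUnit_iff_isUnit_det S).mp hSu
  have hconj : ∀ x, (S * M * S⁻¹) *ᵥ (S *ᵥ x) = S *ᵥ (M *ᵥ x) := fun x => by
    rw [mulVec_mulVec, Matrix.mul_assoc, nonsing_inv_mul _ hSdet, Matrix.mul_one, mulVec_mulVec]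
  have hinj : Function.Injective (S *ᵥ ·) := mulVec_injective_iff_isUnit.mpr hSu
  rw [matBnorm, specNorm]
  congr 1
  ext t
  simp only [vecBnorm_eq_vecNorm2_mulVec hS]
  constructor
  · rintro ⟨x, hx, rfl⟩
    exact ⟨S *ᵥ x, fun h => hx (hinj (h.trans (mulVec_zero S).symm)), by rw [hconj]⟩
  · rintro ⟨y, hy, rfl⟩
    have hy' : S *ᵥ (S⁻¹ *ᵥ y) = y := by rw [mulVec_mulVec, mul_nonsing_inv _ hSdet, one_mulVec]
    refine ⟨S⁻¹ *ᵥ y, fun h => hy (by rw [← hy', h, mulVec_zero]), ?_⟩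
    rw [← hconj, hy']

theorem l2_opNorm_le_norm_mul_norm_inv_mul_matBnorm (hS : Sᴴ * S = B) (hSu : IsUnit S)
    (M : Matrix m m ℂ) : ‖M‖ ≤ ‖S‖ * ‖S⁻¹‖ * matBnorm B M := by
  have hSdet : IsUnit S.det := (isUnit_iff_isUnit_det S).mp hSu
  have hM : M = S⁻¹ * (S * M * S⁻¹) * S := by
    simp only [← Matrix.mul_assoc, nonsing_inv_mul _ hSdet, Matrix.one_mul]
    rw [Matrix.mul_assoc, nonsing_inv_mul _ hSdet, Matrix.mul_one]
  calc ‖M‖ = ‖S⁻¹ * (S * M * S⁻¹) * S‖ := by rw [← hM]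
    _ ≤ ‖S⁻¹‖ * ‖S * M * S⁻¹‖ * ‖S‖ :=
      (l2_opNorm_mul _ _).trans (by gcongr; exact l2_opNorm_mul _ _)
    _ = ‖S‖ * ‖S⁻¹‖ * matBnorm B M := by
      rw [matBnorm_eq_specNorm_conj hS hSu, specNorm_eq_l2_opNorm]; ring

theorem norm_mul_norm_inv_eq_sqrt (hS : Sᴴ * S = B) :
    ‖S‖ * ‖S⁻¹‖ = Real.sqrt (‖B‖ * ‖B⁻¹‖) := by
  have hB : ‖B‖ = ‖S‖ ^ 2 := by rw [← hS, l2_opNorm_conjTranspose_mul_self, sq]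
  have hBinv : ‖B⁻¹‖ = ‖S⁻¹‖ ^ 2 := by
    rw [← hS, Matrix.mul_inv_rev, ← conjTranspose_conjTranspose S⁻¹, ← conjTranspose_nonsing_inv,
      l2_opNorm_conjTranspose_mul_self, l2_opNorm_conjTranspose, conjTranspose_conjTranspose, sq]
  rw [hB, hBinv, ← mul_pow, Real.sqrt_sq (by positivity)]

theorem Matrix.PosDef.exists_isUnit_conjTranspose_mul_self (hB : B.PosDef) :
    ∃ S : Matrix m m ℂ, IsUnit S ∧ Sᴴ * S = B := by
  have hB0 : 0 ≤ B := nonneg_iff_posSemidef.mpr hB.posSemidef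
  refine ⟨CFC.sqrt B, CFC.isUnit_sqrt_iff_isStrictlyPositive.mpr hB.isStrictlyPositive, ?_⟩
  rw [(nonneg_iff_posSemidef.mp (CFC.sqrt_nonneg B)).1, CFC.sqrt_mul_sqrt_self B hB0]

theorem l2_opNorm_le_sqrt_cond_mul_matBnorm (hB : B.PosDef) (M : Matrix m m ℂ) :
    ‖M‖ ≤ Real.sqrt (‖B‖ * ‖B⁻¹‖) * matBnorm B M := by
  obtain ⟨S, hSu, hS⟩ := hB.exists_isUnit_conjTranspose_mul_self
  rw [← norm_mul_norm_inv_eq_sqrt hS]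
  exact l2_opNorm_le_norm_mul_norm_inv_mul_matBnorm hS hSu M

end

theorem Matrix.sub_inv_conj_eq_neg_inv_conj_sub {m p R : Type*} [Fintype m] [Fintype p]
    [DecidableEq p] [CommRing R] [StarRing R] (A : Matrix m m R) (G Ω : Matrix m p R)
    (C : Matrix p p R) (hF : IsUnit (Gᴴ * Ω)) :
    C - ((Gᴴ * Ω)ᴴ)⁻¹ * (Ωᴴ * A * Ω) * (Gᴴ * Ω)⁻¹ =
      -((Gᴴ * Ω)⁻¹ᴴ * (Ωᴴ * (A - G * C * Gᴴ) * Ω) * (Gᴴ * Ω)⁻¹) := by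
  set F := Gᴴ * Ω with hFdef
  have hFdet : IsUnit F.det := (isUnit_iff_isUnit_det F).mp hF
  have hsandwich : Ωᴴ * (G * C * Gᴴ) * Ω = Fᴴ * C * F := by
    simp only [hFdef, conjTranspose_mul, conjTranspose_conjTranspose, Matrix.mul_assoc]
  have hFHdet : IsUnit Fᴴ.det := by rwa [det_conjTranspose, isUnit_star]
  have hcancel : F⁻¹ᴴ * (Fᴴ * C * F) * F⁻¹ = C := by
    rw [conjTranspose_nonsing_inv, Matrix.mul_assoc, Matrix.mul_assoc, mul_nonsing_inv _ hFdet,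
      Matrix.mul_one, ← Matrix.mul_assoc, nonsing_inv_mul _ hFHdet, Matrix.one_mul]
  rw [Matrix.mul_sub, Matrix.sub_mul, hsandwich, Matrix.mul_sub, Matrix.sub_mul, hcancel,
    conjTranspose_nonsing_inv, neg_sub]

theorem Matrix.l2_opNorm_conjTranspose_mul_mul_le {𝕜 m p : Type*} [RCLike 𝕜] [Fintype m]
    [Fintype p] [DecidableEq m] [DecidableEq p] (X : Matrix m p 𝕜) (M : Matrix m m 𝕜) :
    ‖Xᴴ * M * X‖ ≤ ‖M‖ * ‖X‖ ^ 2 :=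
  calc ‖Xᴴ * M * X‖ ≤ ‖Xᴴ‖ * ‖M‖ * ‖X‖ :=
        (l2_opNorm_mul _ _).trans (by gcongr; exact l2_opNorm_mul _ _)
    _ = ‖M‖ * ‖X‖ ^ 2 := by rw [l2_opNorm_conjTranspose]; ring

theorem statement7_general {n r : ℕ} (A B : Matrix (Fin n) (Fin n) ℂ)
    (hB : B.PosDef)
    (Q : Matrix (Fin n) (Fin r) ℂ)
    (ε : ℝ)
    (hlow : matBnorm B (A - (B * Q) * (Qᴴ * A * Q) * (B * Q)ᴴ) ≤ 2 * ε)
    (Ω : Matrix (Fin n) (Fin r) ℂ) (hF : IsUnit (Qᴴ * B * Ω)) :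
    specNorm ((Qᴴ * A * Q) -
        ((Qᴴ * B * Ω)ᴴ)⁻¹ * (Ωᴴ * A * Ω) * (Qᴴ * B * Ω)⁻¹) ≤
      2 * ε * Real.sqrt (specNorm B * specNorm B⁻¹) * specNorm Ω ^ 2 *
        specNorm (Qᴴ * B * Ω)⁻¹ ^ 2 := by
  have hF_eq : Qᴴ * B * Ω = (B * Q)ᴴ * Ω := by rw [conjTranspose_mul, hB.1]
  set E := A - (B * Q) * (Qᴴ * A * Q) * (B * Q)ᴴ
  have hE : ‖E‖ ≤ 2 * ε * Real.sqrt (‖B‖ * ‖B⁻¹‖) :=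
    calc ‖E‖ ≤ Real.sqrt (‖B‖ * ‖B⁻¹‖) * matBnorm B E := l2_opNorm_le_sqrt_cond_mul_matBnorm hB E
      _ ≤ 2 * ε * Real.sqrt (‖B‖ * ‖B⁻¹‖) := by rw [mul_comm]; gcongr
  simp only [specNorm_eq_l2_opNorm]
  rw [hF_eq, sub_inv_conj_eq_neg_inv_conj_sub _ _ _ _ (hF_eq ▸ hF), norm_neg]
  calc _ ≤ ‖Ωᴴ * E * Ω‖ * ‖((B * Q)ᴴ * Ω)⁻¹‖ ^ 2 := l2_opNorm_conjTranspose_mul_mul_le _ _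
    _ ≤ ‖E‖ * ‖Ω‖ ^ 2 * ‖((B * Q)ᴴ * Ω)⁻¹‖ ^ 2 := by
      gcongr; exact l2_opNorm_conjTranspose_mul_mul_le _ _
    _ ≤ _ := by gcongr

/-- error bound for the single-pass approximation
    ‖T − T̃‖₂ ≤ 2ε·√κ(B)·σ_max(Ω)²/σ_min(F)² = 2ε·√κ(B)·‖Ω‖₂²·‖F⁻¹‖₂². -/
theorem statement7 {n r : ℕ} (A B : Matrix (Fin n) (Fin n) ℂ)
    (hA : A.IsHermitian) (hB : B.PosDef)
    (Q : Matrix (Fin n) (Fin r) ℂ) (hQ : Qᴴ * B * Q = 1)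
    (ε : ℝ) (hε : 0 ≤ ε)
    (hlow : matBnorm B (A - (B * Q) * (Qᴴ * A * Q) * (B * Q)ᴴ) ≤ 2 * ε)
    (Ω : Matrix (Fin n) (Fin r) ℂ) (hF : IsUnit (Qᴴ * B * Ω)) :
    specNorm ((Qᴴ * A * Q) -
        ((Qᴴ * B * Ω)ᴴ)⁻¹ * (Ωᴴ * A * Ω) * (Qᴴ * B * Ω)⁻¹) ≤
      2 * ε * Real.sqrt (specNorm B * specNorm B⁻¹) * specNorm Ω ^ 2 *
        specNorm (Qᴴ * B * Ω)⁻¹ ^ 2 :=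
  statement7_general A B hB Q ε hlow Ω hF
end
end

section
/- Let B ∈ ℂ^{n×n} be Hermitian positive definite, C ∈ ℂ^{n×n}, and Ω ∈ ℂ^{n×ℓ}. Suppose CΩ = QR where Q ∈ ℂ^{n×ℓ} satisfies Q*BQ = I_ℓ and R ∈ ℂ^{ℓ×ℓ}, and let P_B = QQ*B. Then for every matrix F ∈ ℂ^{ℓ×n}, ‖(I − P_B)C‖_B ≤ 2·‖C − CΩF‖_B. -/
/-!
`P_B = QQ*B` is the B-orthogonal projection onto the range of `Q`, which contains the range of
`CΩ`. Hence `(I - P_B) C = (I - P_B)(C - CΩF)`, and since `I - P_B` is a B-orthogonal projection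
it is a contraction in the B-norm: `B - (I - P_B)* B (I - P_B) = (Q*B)*(Q*B)` is positive
semidefinite. This gives the bound even with constant 1.
-/
open Matrix ComplexOrder

noncomputable section

open scoped MatrixOrder Matrix.Norms.L2Operator

section BNorm

variable {m : Type*} [Fintype m] {B : Matrix m m ℂ}

theorem vecBnorm_pos (hB : B.PosDef) {x : m → ℂ} (hx : x ≠ 0) : 0 < vecBnorm B x :=
  Real.sqrt_pos.2 (hB.re_dotProduct_pos hx)

theorem vecBnorm_mulVec_le_of_posSemidef_sub {A : Matrix m m ℂ}
    (hA : (B - Aᴴ * B * A).PosSemidef) (x : m → ℂ) :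
    vecBnorm B (A *ᵥ x) ≤ vecBnorm B x := by
  have hquad : star (A *ᵥ x) ⬝ᵥ B *ᵥ (A *ᵥ x) = star x ⬝ᵥ (Aᴴ * B * A) *ᵥ x := by
    rw [star_mulVec, ← dotProduct_mulVec, mulVec_mulVec, mulVec_mulVec, Matrix.mul_assoc]
  have hgap := hA.re_dotProduct_nonneg x
  rw [sub_mulVec, dotProduct_sub, map_sub] at hgap
  unfold vecBnorm
  rw [hquad]
  exact Real.sqrt_le_sqrt (sub_nonneg.1 hgap)

theorem matBnorm_nonneg (M : Matrix m m ℂ) : 0 ≤ matBnorm B M :=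
  Real.sSup_nonneg fun _ ⟨_, _, ht⟩ => ht ▸ div_nonneg (Real.sqrt_nonneg _) (Real.sqrt_nonneg _)

theorem matBnorm_le_of_forall_vecBnorm_mulVec_le (hB : B.PosDef) {M : Matrix m m ℂ} {c : ℝ}
    (hc : 0 ≤ c) (h : ∀ x, vecBnorm B (M *ᵥ x) ≤ c * vecBnorm B x) : matBnorm B M ≤ c := by
  refine Real.sSup_le ?_ hc
  rintro _ ⟨x, hx, rfl⟩
  exact (div_le_iff₀ (vecBnorm_pos hB hx)).2 (h x)

variable [DecidableEq m]

theorem vecBnorm_eq_norm_sqrt_mulVec (hB : B.PosSemidef) (x : m → ℂ) :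
    vecBnorm B x = ‖(EuclideanSpace.equiv m ℂ).symm (CFC.sqrt B *ᵥ x)‖ := by
  have hS : (CFC.sqrt B)ᴴ = CFC.sqrt B := (CFC.sqrt_nonneg B).posSemidef.isHermitian
  have hquad : star x ⬝ᵥ B *ᵥ x = star (CFC.sqrt B *ᵥ x) ⬝ᵥ CFC.sqrt B *ᵥ x := calc
    _ = star x ⬝ᵥ (CFC.sqrt B * CFC.sqrt B) *ᵥ x := by rw [CFC.sqrt_mul_sqrt_self B hB.nonneg]
    _ = _ := by rw [← mulVec_mulVec, dotProduct_mulVec, star_mulVec, hS]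
  rw [vecBnorm, hquad, ← Real.sqrt_sq (norm_nonneg _), @norm_sq_eq_re_inner ℂ,
    EuclideanSpace.inner_eq_star_dotProduct, dotProduct_comm]
  rfl

-- Conjugating by `B^{1/2}` turns B-norms into Euclidean norms. The bound makes the set in
-- `matBnorm` bounded above; otherwise its `sSup` would be the junk value 0.
theorem vecBnorm_mulVec_le (hB : B.PosDef) (M : Matrix m m ℂ) (x : m → ℂ) :
    vecBnorm B (M *ᵥ x) ≤ ‖CFC.sqrt B * M * (CFC.sqrt B)⁻¹‖ * vecBnorm B x := by
  have hS : IsUnit (CFC.sqrt B).det := (isUnit_iff_isUnit_det _).1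
    (CFC.isUnit_sqrt_iff_isStrictlyPositive.2 hB.isStrictlyPositive)
  have hconj : CFC.sqrt B *ᵥ (M *ᵥ x) =
      (CFC.sqrt B * M * (CFC.sqrt B)⁻¹) *ᵥ (CFC.sqrt B *ᵥ x) := by
    rw [mulVec_mulVec, mulVec_mulVec, Matrix.mul_assoc (CFC.sqrt B * M), nonsing_inv_mul _ hS,
      Matrix.mul_one]
  rw [vecBnorm_eq_norm_sqrt_mulVec hB.posSemidef, vecBnorm_eq_norm_sqrt_mulVec hB.posSemidef,
    hconj]
  exact l2_opNorm_mulVec _ ((EuclideanSpace.equiv m ℂ).symm (CFC.sqrt B *ᵥ x))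

theorem vecBnorm_mulVec_le_matBnorm (hB : B.PosDef) (M : Matrix m m ℂ) (x : m → ℂ) :
    vecBnorm B (M *ᵥ x) ≤ matBnorm B M * vecBnorm B x := by
  rcases eq_or_ne x 0 with rfl | hx
  · simp [vecBnorm]
  have hbdd : BddAbove {t : ℝ | ∃ x : m → ℂ, x ≠ 0 ∧
      t = vecBnorm B (M *ᵥ x) / vecBnorm B x} := by
    refine ⟨‖CFC.sqrt B * M * (CFC.sqrt B)⁻¹‖, ?_⟩
    rintro _ ⟨y, hy, rfl⟩
    exact (div_le_iff₀ (vecBnorm_pos hB hy)).2 (vecBnorm_mulVec_le hB M y)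
  exact (div_le_iff₀ (vecBnorm_pos hB hx)).1 (le_csSup hbdd ⟨x, hx, rfl⟩)

theorem matBnorm_mul_le_of_forall_vecBnorm_mulVec_le (hB : B.PosDef) {P : Matrix m m ℂ}
    (hP : ∀ x, vecBnorm B (P *ᵥ x) ≤ vecBnorm B x) (M : Matrix m m ℂ) :
    matBnorm B (P * M) ≤ matBnorm B M :=
  matBnorm_le_of_forall_vecBnorm_mulVec_le hB (matBnorm_nonneg M) fun x => by
    rw [← mulVec_mulVec]
    exact (hP _).trans (vecBnorm_mulVec_le_matBnorm hB M x)

end BNorm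

section BOrthogonalProjection

variable {m k : Type*} [Fintype m] [Fintype k] [DecidableEq m] [DecidableEq k]
  {B : Matrix m m ℂ} {Q : Matrix m k ℂ}

theorem one_sub_projection_mul_self (hQ : Qᴴ * B * Q = 1) : (1 - Q * Qᴴ * B) * Q = 0 := by
  rw [Matrix.sub_mul, Matrix.one_mul, Matrix.mul_assoc, Matrix.mul_assoc, ← Matrix.mul_assoc Qᴴ,
    hQ, Matrix.mul_one, sub_self]

theorem sub_conjTranspose_mul_mul_one_sub_projection (hB : B.IsHermitian)
    (hQ : Qᴴ * B * Q = 1) :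
    B - (1 - Q * Qᴴ * B)ᴴ * B * (1 - Q * Qᴴ * B) = (Qᴴ * B)ᴴ * (Qᴴ * B) := by
  have hQ' : ∀ X : Matrix k m ℂ, Qᴴ * (B * (Q * X)) = X := fun X => by
    rw [← Matrix.mul_assoc, ← Matrix.mul_assoc, hQ, Matrix.one_mul]
  simp only [conjTranspose_sub, conjTranspose_one, conjTranspose_mul, conjTranspose_conjTranspose,
    hB.eq, Matrix.sub_mul, Matrix.mul_sub, Matrix.one_mul, Matrix.mul_one, Matrix.mul_assoc, hQ']
  abel

theorem vecBnorm_one_sub_projection_mulVec_le (hB : B.IsHermitian) (hQ : Qᴴ * B * Q = 1)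
    (x : m → ℂ) : vecBnorm B ((1 - Q * Qᴴ * B) *ᵥ x) ≤ vecBnorm B x :=
  vecBnorm_mulVec_le_of_posSemidef_sub
    (sub_conjTranspose_mul_mul_one_sub_projection hB hQ ▸ posSemidef_conjTranspose_mul_self _) x

end BOrthogonalProjection

/-- if CΩ = QR with Q*BQ = I, then for every F,
    ‖(I − P_B)C‖_B ≤ 2‖C − CΩF‖_B. -/
theorem statement11 {n l : ℕ} (B : Matrix (Fin n) (Fin n) ℂ) (hB : B.PosDef)
    (C : Matrix (Fin n) (Fin n) ℂ) (Ω : Matrix (Fin n) (Fin l) ℂ)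
    (Q : Matrix (Fin n) (Fin l) ℂ) (R : Matrix (Fin l) (Fin l) ℂ)
    (hQR : C * Ω = Q * R) (hQ : Qᴴ * B * Q = 1)
    (F : Matrix (Fin l) (Fin n) ℂ) :
    matBnorm B ((1 - Q * Qᴴ * B) * C) ≤ 2 * matBnorm B (C - C * Ω * F) := by
  have hres : (1 - Q * Qᴴ * B) * C = (1 - Q * Qᴴ * B) * (C - C * Ω * F) := by
    rw [Matrix.mul_sub, hQR, ← Matrix.mul_assoc, ← Matrix.mul_assoc,
      one_sub_projection_mul_self hQ, Matrix.zero_mul, Matrix.zero_mul, sub_zero]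
  calc matBnorm B ((1 - Q * Qᴴ * B) * C)
      = matBnorm B ((1 - Q * Qᴴ * B) * (C - C * Ω * F)) := by rw [hres]
    _ ≤ matBnorm B (C - C * Ω * F) := matBnorm_mul_le_of_forall_vecBnorm_mulVec_le hB
        (vecBnorm_one_sub_projection_mulVec_le hB.isHermitian hQ) _
    _ ≤ 2 * matBnorm B (C - C * Ω * F) := by linarith [matBnorm_nonneg (B := B) (C - C * Ω * F)]
end
end

section
/- Let A ∈ ℂ^{n×n} be Hermitian and B ∈ ℂ^{n×n} be Hermitian positive definite. Let ũ ∈ ℂⁿ satisfy ũ*Bũ = 1, set λ̃ = ũ*Aũ (the Rayleigh quotient, a real number) and r = Aũ − λ̃Bũ. Let λ be a generalized eigenvalue of the pencil (A, B) at minimal distance from λ̃, and suppose δ := min{ |λ̃ − λ_i| : λ_i a generalized eigenvalue of (A,B) with λ_i ≠ λ } is positive. Then |λ − λ̃| ≤ ‖r‖_{B⁻¹}² / δ. -/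
open Matrix ComplexOrder

noncomputable section

/-!
Put `S = B^{1/2}`, `G = S⁻¹AS⁻¹` and `v = Sũ`. Then `v` is a unit vector with Rayleigh quotient `λ̃`
for `G`, and `S⁻¹r = (G - λ̃)v`, so `‖r‖²_{B⁻¹} = ‖(G - λ̃)v‖²`. In an orthonormal eigenbasis `(bᵢ)`
of `G`, the weights `pᵢ = |⟨bᵢ, v⟩|²` are a probability distribution on the eigenvalues `λᵢ` with
mean `λ̃` and variance `‖(G - λ̃)v‖²`. Temple's argument: if no `λᵢ` lies strictly between `a ≤ b`,
then `∑ (λᵢ - a)(λᵢ - b) pᵢ ≥ 0`, which says that the variance is at least `(b - λ̃)(λ̃ - a)`.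
If `λ ≤ λ̃`, minimality of `|λ - λ̃|` and the gap `δ` allow `a = λ`, `b = λ̃ + δ`; the case
`λ̃ ≤ λ` is symmetric.
-/

section Temple

variable {ι : Type*} {lam p : ι → ℝ} {t : ℝ}

theorem sub_mul_sub_le_sum_sq_of_gap [Fintype ι] {a b : ℝ} (hp : ∀ i, 0 ≤ p i)
    (hp1 : ∑ i, p i = 1) (hmean : ∑ i, lam i * p i = t) (hab : a ≤ b)
    (hgap : ∀ i, lam i ≤ a ∨ b ≤ lam i) :
    (b - t) * (t - a) ≤ ∑ i, (lam i - t) ^ 2 * p i := by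
  have hnonneg : 0 ≤ ∑ i, (lam i - a) * (lam i - b) * p i := by
    refine Finset.sum_nonneg fun i _ => mul_nonneg ?_ (hp i)
    rcases hgap i with h | h
    · exact mul_nonneg_of_nonpos_of_nonpos (by linarith) (by linarith)
    · exact mul_nonneg (by linarith) (by linarith)
  have hexpand : ∑ i, (lam i - a) * (lam i - b) * p i =
      ∑ i, (lam i - t) ^ 2 * p i + (2 * t - a - b) * (∑ i, lam i * p i - t * ∑ i, p i)
        + (t - a) * (t - b) * ∑ i, p i := by
    simp only [Finset.mul_sum, ← Finset.sum_sub_distrib, ← Finset.sum_add_distrib]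
    exact Finset.sum_congr rfl fun i _ => by ring
  rw [hexpand, hmean, hp1] at hnonneg
  nlinarith

theorem forall_le_or_add_le_of_nearest {δ : ℝ} {i₀ : ι}
    (hmin : ∀ i, |lam i₀ - t| ≤ |lam i - t|) (hδ : ∀ i, lam i ≠ lam i₀ → δ ≤ |t - lam i|)
    (hle : lam i₀ ≤ t) (i : ι) : lam i ≤ lam i₀ ∨ t + δ ≤ lam i := by
  by_cases he : lam i = lam i₀
  · exact Or.inl he.le
  have hm := hmin i
  have hd := hδ i he
  rw [abs_of_nonpos (sub_nonpos.2 hle)] at hm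
  rcases le_total (lam i) t with h | h
  · rw [abs_of_nonpos (sub_nonpos.2 h)] at hm
    exact Or.inl (by linarith)
  · rw [abs_of_nonpos (sub_nonpos.2 h)] at hd
    exact Or.inr (by linarith)

theorem abs_sub_mul_le_sum_sq_of_nearest [Fintype ι] {δ : ℝ} {i₀ : ι} (hp : ∀ i, 0 ≤ p i)
    (hp1 : ∑ i, p i = 1) (hmean : ∑ i, lam i * p i = t)
    (hmin : ∀ i, |lam i₀ - t| ≤ |lam i - t|) (hδ0 : 0 ≤ δ)
    (hδ : ∀ i, lam i ≠ lam i₀ → δ ≤ |t - lam i|) :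
    |lam i₀ - t| * δ ≤ ∑ i, (lam i - t) ^ 2 * p i := by
  rcases le_total (lam i₀) t with hle | hge
  · have := sub_mul_sub_le_sum_sq_of_gap hp hp1 hmean (by linarith)
      (forall_le_or_add_le_of_nearest hmin hδ hle)
    rw [abs_of_nonpos (sub_nonpos.2 hle)]
    linarith
  · -- mirror image of the first case under `λ ↦ -λ`
    have hgap := forall_le_or_add_le_of_nearest (lam := (-lam ·)) (t := -t) (δ := δ)
      (fun i => by simpa only [neg_sub_neg, abs_sub_comm t] using hmin i)
      (fun i hi => by rw [neg_sub_neg, abs_sub_comm]; exact hδ i (by simpa using hi))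
      (neg_le_neg hge)
    have := sub_mul_sub_le_sum_sq_of_gap hp hp1 hmean (a := t - δ) (by linarith)
      fun i => (hgap i).symm.imp (by intro h; linarith) (by intro h; linarith)
    rw [abs_of_nonneg (sub_nonneg.2 hge)]
    linarith

end Temple

namespace Matrix

theorem star_mulVec_dotProduct_mulVec {R m : Type*} [CommSemiring R] [StarRing R] [Fintype m]
    (M N : Matrix m m R) (x y : m → R) :
    star (M *ᵥ x) ⬝ᵥ (N *ᵥ y) = star x ⬝ᵥ (Mᴴ * N) *ᵥ y := by
  rw [star_mulVec, dotProduct_mulVec, vecMul_vecMul, dotProduct_mulVec]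

end Matrix

namespace Matrix.IsHermitian

variable {𝕜 m : Type*} [RCLike 𝕜] [Fintype m] [DecidableEq m] {G : Matrix m m 𝕜}
  (hG : G.IsHermitian)

theorem star_eigenvectorBasis_dotProduct_mulVec (i : m) (x : m → 𝕜) :
    star ⇑(hG.eigenvectorBasis i) ⬝ᵥ (G *ᵥ x) =
      hG.eigenvalues i * (star ⇑(hG.eigenvectorBasis i) ⬝ᵥ x) := by
  have hrow : star ⇑(hG.eigenvectorBasis i) ᵥ* G = star (G *ᵥ ⇑(hG.eigenvectorBasis i)) := by
    rw [star_mulVec, hG.eq]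
  rw [dotProduct_mulVec, hrow, hG.mulVec_eigenvectorBasis, star_smul,
    star_trivial, smul_dotProduct, RCLike.real_smul_eq_coe_mul]

theorem star_dotProduct_eq_sum_eigenvectorBasis (x y : m → 𝕜) :
    star x ⬝ᵥ y = ∑ i, star (star ⇑(hG.eigenvectorBasis i) ⬝ᵥ x) *
      (star ⇑(hG.eigenvectorBasis i) ⬝ᵥ y) := by
  have := hG.eigenvectorBasis.sum_inner_mul_inner (WithLp.toLp 2 x) (WithLp.toLp 2 y)
  simp only [EuclideanSpace.inner_eq_star_dotProduct] at this
  simp only [← star_dotProduct]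
  simpa only [dotProduct_comm] using this.symm

theorem star_dotProduct_eq_sum_of_eigenvectorBasis {v x y : m → 𝕜} {f g : m → ℝ}
    (hx : ∀ i, star ⇑(hG.eigenvectorBasis i) ⬝ᵥ x = f i * (star ⇑(hG.eigenvectorBasis i) ⬝ᵥ v))
    (hy : ∀ i, star ⇑(hG.eigenvectorBasis i) ⬝ᵥ y = g i * (star ⇑(hG.eigenvectorBasis i) ⬝ᵥ v)) :
    star x ⬝ᵥ y = ((∑ i, f i * g i * ‖star ⇑(hG.eigenvectorBasis i) ⬝ᵥ v‖ ^ 2 : ℝ) : 𝕜) := by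
  rw [hG.star_dotProduct_eq_sum_eigenvectorBasis]
  push_cast
  refine Finset.sum_congr rfl fun i _ => ?_
  rw [hx, hy, star_mul', RCLike.star_def, RCLike.conj_ofReal, ← RCLike.conj_mul]
  ring

theorem abs_eigenvalues_sub_mul_le {v : m → 𝕜} (hv : star v ⬝ᵥ v = 1) {t : ℝ}
    (ht : (t : 𝕜) = star v ⬝ᵥ G *ᵥ v) {i₀ : m}
    (hmin : ∀ i, |hG.eigenvalues i₀ - t| ≤ |hG.eigenvalues i - t|) {δ : ℝ} (hδ0 : 0 ≤ δ)
    (hδ : ∀ i, hG.eigenvalues i ≠ hG.eigenvalues i₀ → δ ≤ |t - hG.eigenvalues i|) :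
    |hG.eigenvalues i₀ - t| * δ ≤
      RCLike.re (star (G *ᵥ v - (t : 𝕜) • v) ⬝ᵥ (G *ᵥ v - (t : 𝕜) • v)) := by
  set p : m → ℝ := fun i => ‖star ⇑(hG.eigenvectorBasis i) ⬝ᵥ v‖ ^ 2
  have hv_coord (i : m) : star ⇑(hG.eigenvectorBasis i) ⬝ᵥ v =
      (1 : ℝ) * (star ⇑(hG.eigenvectorBasis i) ⬝ᵥ v) := by simp
  have hGv_coord := hG.star_eigenvectorBasis_dotProduct_mulVec (x := v)
  have hres_coord (i : m) : star ⇑(hG.eigenvectorBasis i) ⬝ᵥ (G *ᵥ v - (t : 𝕜) • v) =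
      ((hG.eigenvalues i - t : ℝ) : 𝕜) * (star ⇑(hG.eigenvectorBasis i) ⬝ᵥ v) := by
    rw [dotProduct_sub, dotProduct_smul, hGv_coord, smul_eq_mul]
    push_cast
    ring
  have hp1 : ∑ i, p i = 1 := by
    have := hG.star_dotProduct_eq_sum_of_eigenvectorBasis hv_coord hv_coord
    simp only [hv, one_mul] at this
    exact_mod_cast this.symm
  have hmean : ∑ i, hG.eigenvalues i * p i = t := by
    have := hG.star_dotProduct_eq_sum_of_eigenvectorBasis hv_coord hGv_coord
    simp only [one_mul, ← ht] at this
    exact_mod_cast this.symm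
  have hvar := hG.star_dotProduct_eq_sum_of_eigenvectorBasis hres_coord hres_coord
  simp only [← sq] at hvar
  rw [hvar, RCLike.ofReal_re]
  exact abs_sub_mul_le_sum_sq_of_nearest (fun i => sq_nonneg _) hp1 hmean hmin hδ0 hδ

end Matrix.IsHermitian

theorem statement15_general {n : ℕ} (A B S : Matrix (Fin n) (Fin n) ℂ)
    (hS : S.PosDef) (hSS : S * S = B)
    (u : Fin n → ℂ) (hu : star u ⬝ᵥ B *ᵥ u = 1)
    (tlam : ℝ) (htlam : (tlam : ℂ) = star u ⬝ᵥ A *ᵥ u)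
    (hG : (S⁻¹ * A * S⁻¹).IsHermitian)
    (i₀ : Fin n) (hmin : ∀ i, |hG.eigenvalues i₀ - tlam| ≤ |hG.eigenvalues i - tlam|)
    (δ : ℝ) (hδpos : 0 < δ)
    (hδ : ∀ i, hG.eigenvalues i ≠ hG.eigenvalues i₀ → δ ≤ |tlam - hG.eigenvalues i|) :
    |hG.eigenvalues i₀ - tlam| ≤
      vecBnorm B⁻¹ (A *ᵥ u - (tlam : ℂ) • (B *ᵥ u)) ^ 2 / δ := by
  have hSH : S.IsHermitian := hS.1
  have hdet : IsUnit S.det := (isUnit_iff_isUnit_det S).1 hS.isUnit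
  have hinv_mul : S⁻¹ * S = 1 := nonsing_inv_mul S hdet
  have hmul_inv : S * S⁻¹ = 1 := mul_nonsing_inv S hdet
  set r := A *ᵥ u - (tlam : ℂ) • (B *ᵥ u)
  have hv : star (S *ᵥ u) ⬝ᵥ (S *ᵥ u) = 1 := by
    rw [star_mulVec_dotProduct_mulVec, hSH.eq, hSS, hu]
  have ht : (tlam : ℂ) = star (S *ᵥ u) ⬝ᵥ (S⁻¹ * A * S⁻¹) *ᵥ (S *ᵥ u) := by
    rw [mulVec_mulVec, star_mulVec_dotProduct_mulVec, hSH.eq, htlam]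
    simp only [Matrix.mul_assoc, hinv_mul, Matrix.mul_one, ← Matrix.mul_assoc S, hmul_inv,
      Matrix.one_mul]
  have hres : (S⁻¹ * A * S⁻¹) *ᵥ (S *ᵥ u) - (tlam : ℂ) • (S *ᵥ u) = S⁻¹ *ᵥ r := by
    rw [mulVec_sub, mulVec_smul, ← hSS]
    simp only [mulVec_mulVec, Matrix.mul_assoc, hinv_mul, Matrix.mul_one,
      ← Matrix.mul_assoc S⁻¹ S, Matrix.one_mul]
  have hnorm : star r ⬝ᵥ B⁻¹ *ᵥ r = star (S⁻¹ *ᵥ r) ⬝ᵥ (S⁻¹ *ᵥ r) := by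
    rw [star_mulVec_dotProduct_mulVec, conjTranspose_nonsing_inv, hSH.eq, ← Matrix.mul_inv_rev,
      hSS]
  have key := hG.abs_eigenvalues_sub_mul_le hv ht hmin hδpos.le hδ
  rw [RCLike.ofReal_eq_complex_ofReal, hres, ← hnorm, RCLike.re_to_complex] at key
  rw [vecBnorm, Real.sq_sqrt ((mul_nonneg (abs_nonneg _) hδpos.le).trans key),
    le_div_iff₀ hδpos]
  exact key

/-- Kato–Temple type bound.  λ̃ = ũ*Aũ is the Rayleigh quotient of the
    B-normalized vector ũ, λ = (eigenvalues of B^{-1/2}AB^{-1/2} =: G) i₀ is a generalized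
    eigenvalue of (A,B) at minimal distance from λ̃, and δ > 0 is the gap to the other
    generalized eigenvalues. Then |λ − λ̃| ≤ ‖r‖_{B⁻¹}²/δ. -/
theorem statement15 {n : ℕ} (A B S : Matrix (Fin n) (Fin n) ℂ)
    (hA : A.IsHermitian) (hB : B.PosDef) (hS : S.PosDef) (hSS : S * S = B)
    (u : Fin n → ℂ) (hu : star u ⬝ᵥ B *ᵥ u = 1)
    (tlam : ℝ) (htlam : (tlam : ℂ) = star u ⬝ᵥ A *ᵥ u)
    (hG : (S⁻¹ * A * S⁻¹).IsHermitian)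
    (i₀ : Fin n) (hmin : ∀ i, |hG.eigenvalues i₀ - tlam| ≤ |hG.eigenvalues i - tlam|)
    (δ : ℝ) (hδpos : 0 < δ)
    (hδ : ∀ i, hG.eigenvalues i ≠ hG.eigenvalues i₀ → δ ≤ |tlam - hG.eigenvalues i|) :
    |hG.eigenvalues i₀ - tlam| ≤
      vecBnorm B⁻¹ (A *ᵥ u - (tlam : ℂ) • (B *ᵥ u)) ^ 2 / δ :=
  statement15_general A B S hS hSS u hu tlam htlam hG i₀ hmin δ hδpos hδ
end
end

section
/- Let A ∈ ℂ^{n×n} be Hermitian and B ∈ ℂ^{n×n} be Hermitian positive definite. Let ũ ∈ ℂⁿ with ‖ũ‖_B = 1, let λ̃ ∈ ℝ, and let r = Aũ − λ̃Bũ. Let λ be a simple generalized eigenvalue of the pencil (A, B) (i.e., of multiplicity one) with B-normalized eigenvector u satisfying Au = λBu and ‖u‖_B = 1, and suppose δ := min{ |λ̃ − λ_i| : λ_i a generalized eigenvalue of (A,B) with λ_i ≠ λ } is positive. Then the sine of the B-angle between u and ũ satisfies √(1 − |⟨u, ũ⟩_B|²) ≤ ‖r‖_{B⁻¹} / δ.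 -/
/-!
With `S = B^{1/2}`, the map `x ↦ S x` is an isometry from the `B`-norm to the Euclidean norm and
`S⁻¹` one from the `B⁻¹`-norm. It sends `ũ` and `u` to Euclidean unit vectors `v` and `w`, turns
the residual `S⁻¹ r` into `G v - λ̃ v` for the Hermitian matrix `G = S⁻¹ A S⁻¹`, and makes `w` an
eigenvector of `G` for `λ`. Since `λ` is simple, in an orthonormal eigenbasis of `G` the vector `w`
is a unimodular multiple of the single basis vector for `λ`, so `sin² ∠ = 1 - |⟨v, w⟩|²` is the
squared mass of `v` on the other basis vectors; there the residual scales the coordinates of `v` by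
`|μⱼ - λ̃| ≥ δ`.
-/

open Matrix ComplexOrder

noncomputable section

open scoped InnerProductSpace

namespace OrthonormalBasis

variable {𝕜 E ι : Type*} [RCLike 𝕜] [NormedAddCommGroup E] [InnerProductSpace 𝕜 E] [Fintype ι]
  (b : OrthonormalBasis ι 𝕜 E) {T : E →ₗ[𝕜] E}

theorem repr_apply_eq_mul_of_eigenbasis {μ : ι → 𝕜} (hb : ∀ j, T (b j) = μ j • b j) (x : E)
    (j : ι) :
    b.repr (T x) j = μ j * b.repr x j := by
  classical
  conv_lhs => rw [← b.sum_repr x]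
  simp [hb, b.repr_self, Pi.single_apply, mul_comm]

theorem repr_eq_zero_of_eigenbasis {μ : ι → 𝕜} (hb : ∀ j, T (b j) = μ j • b j) {w : E} {lam : 𝕜}
    (hw : T w = lam • w) {j : ι} (hj : μ j ≠ lam) : b.repr w j = 0 := by
  have h := b.repr_apply_eq_mul_of_eigenbasis hb w j
  rw [hw, map_smul, PiLp.smul_apply, smul_eq_mul] at h
  exact (mul_eq_mul_right_iff.mp h.symm).resolve_left hj

theorem eq_repr_smul_of_repr_eq_zero {w : E} {i : ι} (hw : ∀ j, j ≠ i → b.repr w j = 0) :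
    w = b.repr w i • b i := by
  conv_lhs => rw [← b.sum_repr w]
  exact Finset.sum_eq_single i (fun j _ hj => by rw [hw j hj, zero_smul]) (by simp)

theorem norm_sq_eq_sum_repr (x : E) : ‖x‖ ^ 2 = ∑ j, ‖b.repr x j‖ ^ 2 := by
  rw [← b.repr.norm_map x, EuclideanSpace.norm_sq_eq]

theorem mul_sq_norm_sub_le_norm_sub_smul_sq {μ : ι → ℝ} (hb : ∀ j, T (b j) = (μ j : 𝕜) • b j)
    {t δ : ℝ} {i : ι} (hδ : ∀ j, j ≠ i → δ ≤ |t - μ j|) (hδpos : 0 ≤ δ) (v : E) :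
    δ ^ 2 * (‖v‖ ^ 2 - ‖b.repr v i‖ ^ 2) ≤ ‖T v - (t : 𝕜) • v‖ ^ 2 := by
  classical
  have hcoord : ∀ j, ‖b.repr (T v - (t : 𝕜) • v) j‖ = |t - μ j| * ‖b.repr v j‖ := by
    intro j
    rw [map_sub, map_smul, PiLp.sub_apply, PiLp.smul_apply, b.repr_apply_eq_mul_of_eigenbasis hb,
      smul_eq_mul, ← sub_mul, norm_mul, ← RCLike.ofReal_sub, RCLike.norm_ofReal, abs_sub_comm]
  rw [b.norm_sq_eq_sum_repr, b.norm_sq_eq_sum_repr, ← Finset.sum_erase_add _ _ (Finset.mem_univ i),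
    add_sub_cancel_right, Finset.mul_sum]
  calc ∑ j ∈ Finset.univ.erase i, δ ^ 2 * ‖b.repr v j‖ ^ 2
      ≤ ∑ j ∈ Finset.univ.erase i, ‖b.repr (T v - (t : 𝕜) • v) j‖ ^ 2 := by
        refine Finset.sum_le_sum fun j hj => ?_
        rw [hcoord, mul_pow]
        gcongr
        exact hδ j (Finset.ne_of_mem_erase hj)
    _ ≤ ∑ j, ‖b.repr (T v - (t : 𝕜) • v) j‖ ^ 2 :=
        Finset.sum_le_sum_of_subset_of_nonneg (Finset.erase_subset _ _) fun _ _ _ => sq_nonneg _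

theorem sqrt_one_sub_norm_inner_sq_le_norm_sub_smul_div {μ : ι → ℝ}
    (hb : ∀ j, T (b j) = (μ j : 𝕜) • b j) {lam : ℝ} (hsimple : ∃! i, μ i = lam) {w : E}
    (hw : ‖w‖ = 1) (hTw : T w = (lam : 𝕜) • w) {v : E} (hv : ‖v‖ = 1) {t δ : ℝ} (hδpos : 0 < δ)
    (hδ : ∀ i, μ i ≠ lam → δ ≤ |t - μ i|) :
    √(1 - ‖⟪v, w⟫_𝕜‖ ^ 2) ≤ ‖T v - (t : 𝕜) • v‖ / δ := by
  obtain ⟨i, -, huniq⟩ := hsimple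
  have hw_eq : w = b.repr w i • b i := b.eq_repr_smul_of_repr_eq_zero fun j hj =>
    b.repr_eq_zero_of_eigenbasis hb hTw fun h => hj (huniq j (RCLike.ofReal_injective h))
  have hinner : ‖⟪v, w⟫_𝕜‖ = ‖b.repr v i‖ := by
    have hwi : ‖b.repr w i‖ = 1 := by
      have h := congrArg norm hw_eq
      rwa [norm_smul, b.orthonormal.1 i, mul_one, hw, eq_comm] at h
    rw [hw_eq, inner_smul_right, norm_mul, hwi, one_mul, ← inner_conj_symm, RCLike.norm_conj,
      b.repr_apply_apply]
  have key := b.mul_sq_norm_sub_le_norm_sub_smul_sq hb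
    (fun j hj => hδ j fun h => hj (huniq j h)) hδpos.le v
  rw [hv, one_pow, ← hinner] at key
  rw [le_div_iff₀ hδpos, ← Real.sqrt_sq hδpos.le, ← Real.sqrt_mul' _ (sq_nonneg δ), mul_comm,
    ← Real.sqrt_sq (norm_nonneg (T v - (t : 𝕜) • v))]
  exact Real.sqrt_le_sqrt key

end OrthonormalBasis

namespace Matrix

variable {m : Type*} [Fintype m]

theorem Binner_conjTranspose_mul_self (S : Matrix m m ℂ) (x y : m → ℂ) :
    Binner (Sᴴ * S) x y = ⟪WithLp.toLp 2 (S *ᵥ y), WithLp.toLp 2 (S *ᵥ x)⟫_ℂ := by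
  rw [Binner, EuclideanSpace.inner_toLp_toLp, ← mulVec_mulVec, dotProduct_mulVec, ← star_mulVec,
    dotProduct_comm]

theorem vecBnorm_conjTranspose_mul_self (S : Matrix m m ℂ) (x : m → ℂ) :
    vecBnorm (Sᴴ * S) x = ‖WithLp.toLp 2 (S *ᵥ x)‖ := by
  rw [@norm_eq_sqrt_re_inner ℂ, ← Binner_conjTranspose_mul_self]
  rfl

theorem nonsing_inv_mulVec_sub_smul_mulVec {R : Type*} [CommRing R] [DecidableEq m]
    {A B S : Matrix m m R} (hS : IsUnit S.det) (hSS : S * S = B) (c : R) (x : m → R) :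
    S⁻¹ *ᵥ (A *ᵥ x - c • (B *ᵥ x)) = (S⁻¹ * A * S⁻¹) *ᵥ (S *ᵥ x) - c • (S *ᵥ x) := by
  rw [mulVec_sub, mulVec_smul, mulVec_mulVec, mulVec_mulVec, mulVec_mulVec, mul_assoc,
    nonsing_inv_mul S hS, mul_one, ← hSS, ← mul_assoc, nonsing_inv_mul S hS, one_mul]

end Matrix

theorem statement16_general {n : ℕ} (A B S : Matrix (Fin n) (Fin n) ℂ)
    (hS : S.PosDef) (hSS : S * S = B)
    (tu : Fin n → ℂ) (htu : vecBnorm B tu = 1) (tlam : ℝ)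
    (u : Fin n → ℂ) (hu : vecBnorm B u = 1) (lam : ℝ)
    (heig : A *ᵥ u = (lam : ℂ) • (B *ᵥ u))
    (hG : (S⁻¹ * A * S⁻¹).IsHermitian)
    (hsimple : ∃! i : Fin n, hG.eigenvalues i = lam)
    (δ : ℝ) (hδpos : 0 < δ)
    (hδ : ∀ i, hG.eigenvalues i ≠ lam → δ ≤ |tlam - hG.eigenvalues i|) :
    Real.sqrt (1 - ‖Binner B u tu‖ ^ 2) ≤
      vecBnorm B⁻¹ (A *ᵥ tu - (tlam : ℂ) • (B *ᵥ tu)) / δ := by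
  have hSdet : IsUnit S.det := (isUnit_iff_isUnit_det S).mp hS.isUnit
  have hBS : Sᴴ * S = B := by rw [hS.1.eq, hSS]
  have hBinv : (S⁻¹)ᴴ * S⁻¹ = B⁻¹ := by
    rw [conjTranspose_nonsing_inv, hS.1.eq, ← Matrix.mul_inv_rev, hSS]
  have hb : ∀ j, toEuclideanLin (S⁻¹ * A * S⁻¹) (hG.eigenvectorBasis j)
      = (hG.eigenvalues j : ℂ) • hG.eigenvectorBasis j := fun j => by
    rw [toLpLin_apply, hG.mulVec_eigenvectorBasis j, ← Complex.coe_smul, WithLp.toLp_smul,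
      WithLp.toLp_ofLp]
  have hw : toEuclideanLin (S⁻¹ * A * S⁻¹) (WithLp.toLp 2 (S *ᵥ u))
      = (lam : ℂ) • WithLp.toLp 2 (S *ᵥ u) := by
    have h := nonsing_inv_mulVec_sub_smul_mulVec (A := A) hSdet hSS lam u
    rw [heig, sub_self, mulVec_zero, eq_comm, sub_eq_zero] at h
    rw [toLpLin_apply, h, WithLp.toLp_smul]
  have hv1 : ‖WithLp.toLp 2 (S *ᵥ tu)‖ = 1 := by rw [← vecBnorm_conjTranspose_mul_self, hBS, htu]
  have hw1 : ‖WithLp.toLp 2 (S *ᵥ u)‖ = 1 := by rw [← vecBnorm_conjTranspose_mul_self, hBS, hu]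
  rw [← hBinv, vecBnorm_conjTranspose_mul_self, nonsing_inv_mulVec_sub_smul_mulVec hSdet hSS, ← hBS,
    Binner_conjTranspose_mul_self]
  exact hG.eigenvectorBasis.sqrt_one_sub_norm_inner_sq_le_norm_sub_smul_div hb hsimple hw1 hw hv1
    hδpos hδ

/-- sin of the B-angle between the exact eigenvector u (of a simple
    generalized eigenvalue λ of (A,B), i.e. an eigenvalue of G = B^{-1/2}AB^{-1/2} of
    multiplicity one) and a B-normalized ũ is bounded by ‖r‖_{B⁻¹}/δ. -/
theorem statement16 {n : ℕ} (A B S : Matrix (Fin n) (Fin n) ℂ)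
    (hA : A.IsHermitian) (hB : B.PosDef) (hS : S.PosDef) (hSS : S * S = B)
    (tu : Fin n → ℂ) (htu : vecBnorm B tu = 1) (tlam : ℝ)
    (u : Fin n → ℂ) (hu : vecBnorm B u = 1) (lam : ℝ)
    (heig : A *ᵥ u = (lam : ℂ) • (B *ᵥ u))
    (hG : (S⁻¹ * A * S⁻¹).IsHermitian)
    (hsimple : ∃! i : Fin n, hG.eigenvalues i = lam)
    (δ : ℝ) (hδpos : 0 < δ)
    (hδ : ∀ i, hG.eigenvalues i ≠ lam → δ ≤ |tlam - hG.eigenvalues i|) :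
    Real.sqrt (1 - ‖Binner B u tu‖ ^ 2) ≤
      vecBnorm B⁻¹ (A *ᵥ tu - (tlam : ℂ) • (B *ᵥ tu)) / δ :=
  statement16_general A B S hS hSS tu htu tlam u hu lam heig hG hsimple δ hδpos hδ
end
end

section
/- Let M ∈ ℝ^{n×n} be symmetric positive definite. Let (Ω, P) be a probability space and ξ₁, …, ξ_N square-integrable real random variables with E[ξ_i ξ_j] = δ_{ij} (Kronecker delta) for all i, j. Let λ_k ≥ 0 and λ̃_k ≥ 0 be real numbers and φ_k, φ̃_k ∈ ℝⁿ vectors, for k = 1, …, N, satisfying: ‖φ_k‖_M = ‖φ̃_k‖_M = 1; ⟨φ_k, φ̃_k⟩_M ≥ 0; |λ_k − λ̃_k| ≤ η; and 1 − ⟨φ_k, φ̃_k⟩_M² ≤ s², where η ≥ 0 and 0 ≤ s ≤ 1. Then E[ ‖ Σ_{k=1}^{N} ξ_k(√λ_k · φ_k − √λ̃_k · φ̃_k) ‖_M² ] ≤ 2Nη + 4s²·Σ_{k=1}^{N} λ_k. (This is a precise form, with explicit constants, of the paper's bound on the mean-square error of the truncated Karhunen–Loève expansion computed from approximate eigenpairs.)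 -/
/-!
Orthonormality of the `ξ k` kills the cross terms, so the mean square equals
`∑ k, ‖√λₖ φₖ - √λ̃ₖ φ̃ₖ‖²_M`. With `c = ⟨φₖ, φ̃ₖ⟩_M` each term is
`(√λₖ - √λ̃ₖ)² + 2 √λₖ √λ̃ₖ (1 - c)`. The first summand is at most `|λₖ - λ̃ₖ| ≤ η`. Since `c ≥ 0`,
`1 - c² ≤ s²` forces `1 - c ≤ s²`, so the second is at most
`(λₖ + λ̃ₖ) s² ≤ (2λₖ + η) s² ≤ 2 s² λₖ + η`.
-/

open Matrix MeasureTheory ProbabilityTheory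

noncomputable section

/-- Euclidean (ℓ²) norm of a real vector. -/
def vecNorm2R {m : Type*} [Fintype m] (x : m → ℝ) : ℝ :=
  Real.sqrt (∑ i, x i ^ 2)

/-- Spectral (ℓ²-operator) norm of a real matrix. -/
def specNormR {m p : Type*} [Fintype m] [Fintype p] (M : Matrix m p ℝ) : ℝ :=
  sSup {t : ℝ | ∃ x : p → ℝ, x ≠ 0 ∧ t = vecNorm2R (M *ᵥ x) / vecNorm2R x}

/-- The B-inner product ⟨x,y⟩_B = yᵀBx. -/
def BinnerR {m : Type*} [Fintype m] (B : Matrix m m ℝ) (x y : m → ℝ) : ℝ :=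
  y ⬝ᵥ B *ᵥ x

/-- The B-norm of a real vector, ‖x‖_B = √(xᵀBx). -/
def vecBnormR {m : Type*} [Fintype m] (B : Matrix m m ℝ) (x : m → ℝ) : ℝ :=
  Real.sqrt (x ⬝ᵥ B *ᵥ x)

/-- The induced B-norm of a real matrix, ‖M‖_B = sup_{x ≠ 0} ‖Mx‖_B / ‖x‖_B. -/
def matBnormR {m : Type*} [Fintype m] (B M : Matrix m m ℝ) : ℝ :=
  sSup {t : ℝ | ∃ x : m → ℝ, x ≠ 0 ∧ t = vecBnormR B (M *ᵥ x) / vecBnormR B x}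


theorem integral_bilinForm_sum_smul {Ω : Type*} [MeasurableSpace Ω] {μ : Measure Ω}
    {ι : Type*} [Fintype ι] [DecidableEq ι] {ξ : ι → Ω → ℝ} (hξ : ∀ i, MemLp (ξ i) 2 μ)
    (horth : ∀ i j, ∫ ω, ξ i ω * ξ j ω ∂μ = if i = j then 1 else 0)
    {E : Type*} [AddCommGroup E] [Module ℝ E] (B : LinearMap.BilinForm ℝ E) (v : ι → E) :
    ∫ ω, B (∑ i, ξ i ω • v i) (∑ i, ξ i ω • v i) ∂μ = ∑ i, B (v i) (v i) := by
  have hint : ∀ i j, Integrable (fun ω ↦ ξ i ω * ξ j ω * B (v i) (v j)) μ := fun i j ↦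
    ((hξ i).integrable_mul (hξ j)).mul_const _
  calc ∫ ω, B (∑ i, ξ i ω • v i) (∑ i, ξ i ω • v i) ∂μ
      = ∫ ω, ∑ i, ∑ j, ξ i ω * ξ j ω * B (v i) (v j) ∂μ := by
        refine integral_congr_ae (ae_of_all _ fun ω ↦ ?_)
        simp only [map_sum, map_smul, LinearMap.sum_apply, LinearMap.smul_apply, smul_eq_mul,
          Finset.mul_sum]
        rw [Finset.sum_comm]
        simp only [mul_left_comm, mul_assoc]
    _ = ∑ i, ∑ j, (if i = j then 1 else 0) * B (v i) (v j) := by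
        rw [integral_finsetSum _ fun i _ ↦ integrable_finsetSum _ fun j _ ↦ hint i j]
        refine Finset.sum_congr rfl fun i _ ↦ ?_
        rw [integral_finsetSum _ fun j _ ↦ hint i j]
        simp only [integral_mul_const, horth]
    _ = ∑ i, B (v i) (v i) := by simp

theorem LinearMap.BilinForm.IsSymm.apply_smul_sub_smul_self {E : Type*} [AddCommGroup E]
    [Module ℝ E] {B : LinearMap.BilinForm ℝ E} (hB : B.IsSymm) (a b : ℝ) (x y : E) :
    B (a • x - b • y) (a • x - b • y) = a ^ 2 * B x x + b ^ 2 * B y y - 2 * a * b * B x y := by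
  simp only [map_sub, map_smul, LinearMap.sub_apply, LinearMap.smul_apply, smul_eq_mul,
    hB.eq y x]
  ring

theorem sub_sq_le_abs_sq_sub_sq {a b : ℝ} (ha : 0 ≤ a) (hb : 0 ≤ b) :
    (a - b) ^ 2 ≤ |a ^ 2 - b ^ 2| := by
  rw [sq_sub_sq, abs_mul, abs_of_nonneg (add_nonneg ha hb), sq, ← abs_mul_abs_self]
  exact mul_le_mul_of_nonneg_right (by rw [abs_le]; constructor <;> linarith) (abs_nonneg _)

theorem add_sub_two_mul_sqrt_mul_sqrt_mul_le {l l' c η s : ℝ} (hl : 0 ≤ l) (hl' : 0 ≤ l')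
    (hc : 0 ≤ c) (hll' : |l - l'| ≤ η) (hcs : 1 - c ^ 2 ≤ s ^ 2) (hs : s ^ 2 ≤ 1) :
    l + l' - 2 * √l * √l' * c ≤ 2 * η + 2 * s ^ 2 * l := by
  obtain ⟨a, ha, rfl⟩ : ∃ a, 0 ≤ a ∧ a ^ 2 = l := ⟨√l, Real.sqrt_nonneg l, Real.sq_sqrt hl⟩
  obtain ⟨b, hb, rfl⟩ : ∃ b, 0 ≤ b ∧ b ^ 2 = l' := ⟨√l', Real.sqrt_nonneg l', Real.sq_sqrt hl'⟩
  rw [Real.sqrt_sq ha, Real.sqrt_sq hb]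
  have hdiff : (a - b) ^ 2 ≤ η := (sub_sq_le_abs_sq_sub_sq ha hb).trans hll'
  have hb2 : b ^ 2 ≤ a ^ 2 + η := by linarith [(abs_le.1 hll').1]
  have hc1 : 1 - c ≤ s ^ 2 := by nlinarith
  have hab : 2 * a * b ≤ a ^ 2 + b ^ 2 := two_mul_le_add_sq a b
  calc a ^ 2 + b ^ 2 - 2 * a * b * c = (a - b) ^ 2 + 2 * a * b * (1 - c) := by ring
    _ ≤ η + (a ^ 2 + b ^ 2) * s ^ 2 := by
        refine add_le_add hdiff ?_
        calc 2 * a * b * (1 - c) ≤ 2 * a * b * s ^ 2 := by gcongr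
          _ ≤ (a ^ 2 + b ^ 2) * s ^ 2 := by gcongr
    _ ≤ η + (2 * a ^ 2 + η) * s ^ 2 := by gcongr η + ?_ * _; linarith
    _ ≤ 2 * η + 2 * s ^ 2 * a ^ 2 := by
        linarith [mul_le_of_le_one_right ((sq_nonneg _).trans hdiff) hs]

theorem sq_vecBnormR {m : Type*} [Fintype m] [DecidableEq m] {B : Matrix m m ℝ}
    (hB : B.PosSemidef) (x : m → ℝ) :
    vecBnormR B x ^ 2 = B.toBilin' x x := by
  rw [vecBnormR, Real.sq_sqrt (by simpa using hB.dotProduct_mulVec_nonneg x),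
    Matrix.toBilin'_apply']

theorem statement19_general {n N : ℕ} (M : Matrix (Fin n) (Fin n) ℝ) (hM : M.PosDef)
    {Ω : Type*} [MeasureSpace Ω]
    (ξ : Fin N → Ω → ℝ) (hξ : ∀ i, MemLp (ξ i) 2 volume)
    (horth : ∀ i j, (∫ ω, ξ i ω * ξ j ω) = if i = j then (1 : ℝ) else 0)
    (lam tlam : Fin N → ℝ) (hlam : ∀ i, 0 ≤ lam i) (htlam : ∀ i, 0 ≤ tlam i)
    (φ tφ : Fin N → Fin n → ℝ)
    (hφ : ∀ i, vecBnormR M (φ i) = 1) (htφ : ∀ i, vecBnormR M (tφ i) = 1)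
    (hpos : ∀ i, 0 ≤ BinnerR M (φ i) (tφ i))
    (η : ℝ) (hev : ∀ i, |lam i - tlam i| ≤ η)
    (s : ℝ) (hs0 : 0 ≤ s) (hs1 : s ≤ 1)
    (hang : ∀ i, 1 - BinnerR M (φ i) (tφ i) ^ 2 ≤ s ^ 2) :
    (∫ ω, vecBnormR M
        (∑ i, ξ i ω • (Real.sqrt (lam i) • φ i - Real.sqrt (tlam i) • tφ i)) ^ 2) ≤
      2 * N * η + 4 * s ^ 2 * ∑ i, lam i := by
  have hB : M.toBilin'.IsSymm :=
    Matrix.isSymm_toBilin'_iff_isSymm.2 (Matrix.isHermitian_iff_isSymm.1 hM.isHermitian)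
  have hsq := sq_vecBnormR hM.posSemidef
  have hunit : ∀ {x}, vecBnormR M x = 1 → M.toBilin' x x = 1 := fun hx ↦ by
    rw [← hsq, hx, one_pow]
  have hterm : ∀ i, M.toBilin' (√(lam i) • φ i - √(tlam i) • tφ i)
      (√(lam i) • φ i - √(tlam i) • tφ i) ≤ 2 * η + 4 * s ^ 2 * lam i := fun i ↦ by
    have hc : M.toBilin' (φ i) (tφ i) = BinnerR M (φ i) (tφ i) := by
      rw [hB.eq, Matrix.toBilin'_apply', BinnerR]
    rw [hB.apply_smul_sub_smul_self, hunit (hφ i), hunit (htφ i), hc,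
      Real.sq_sqrt (hlam i), Real.sq_sqrt (htlam i), mul_one, mul_one]
    have := add_sub_two_mul_sqrt_mul_sqrt_mul_le (hlam i) (htlam i) (hpos i) (hev i) (hang i)
      (pow_le_one₀ hs0 hs1)
    linarith [mul_nonneg (sq_nonneg s) (hlam i)]
  calc _ = ∑ i, M.toBilin' (√(lam i) • φ i - √(tlam i) • tφ i)
          (√(lam i) • φ i - √(tlam i) • tφ i) := by
        simp only [hsq]
        exact integral_bilinForm_sum_smul hξ horth _ _
    _ ≤ ∑ i, (2 * η + 4 * s ^ 2 * lam i) := Finset.sum_le_sum fun i _ ↦ hterm i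
    _ = 2 * N * η + 4 * s ^ 2 * ∑ i, lam i := by
        simp only [Finset.sum_add_distrib, Finset.sum_const, Finset.card_univ, Fintype.card_fin,
          nsmul_eq_mul, Finset.mul_sum]
        ring

/-- mean-square error of the truncated KL expansion computed from
    approximate eigenpairs: E‖Σ_k ξ_k(√λ_k φ_k − √λ̃_k φ̃_k)‖_M² ≤ 2Nη + 4s²Σ_k λ_k. -/
theorem statement19 {n N : ℕ} (M : Matrix (Fin n) (Fin n) ℝ) (hM : M.PosDef)
    {Ω : Type*} [MeasureSpace Ω] (hP : IsProbabilityMeasure (volume : Measure Ω))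
    (ξ : Fin N → Ω → ℝ) (hξ : ∀ i, MemLp (ξ i) 2 volume)
    (horth : ∀ i j, (∫ ω, ξ i ω * ξ j ω) = if i = j then (1 : ℝ) else 0)
    (lam tlam : Fin N → ℝ) (hlam : ∀ i, 0 ≤ lam i) (htlam : ∀ i, 0 ≤ tlam i)
    (φ tφ : Fin N → Fin n → ℝ)
    (hφ : ∀ i, vecBnormR M (φ i) = 1) (htφ : ∀ i, vecBnormR M (tφ i) = 1)
    (hpos : ∀ i, 0 ≤ BinnerR M (φ i) (tφ i))
    (η : ℝ) (hη : 0 ≤ η) (hev : ∀ i, |lam i - tlam i| ≤ η)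
    (s : ℝ) (hs0 : 0 ≤ s) (hs1 : s ≤ 1)
    (hang : ∀ i, 1 - BinnerR M (φ i) (tφ i) ^ 2 ≤ s ^ 2) :
    (∫ ω, vecBnormR M
        (∑ i, ξ i ω • (Real.sqrt (lam i) • φ i - Real.sqrt (tlam i) • tφ i)) ^ 2) ≤
      2 * N * η + 4 * s ^ 2 * ∑ i, lam i :=
  statement19_general M hM ξ hξ horth lam tlam hlam htlam φ tφ hφ htφ hpos η hev s hs0 hs1 hang
end
end
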